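/- Let P = x⁵ + y⁵ + x·z·w³ + w·z⁴ ∈ ℂ[x,y,z,w]. For every nonzero vector (x,y,z,w) ∈ ℂ⁴, all four partial derivatives ∂P/∂x, ∂P/∂y, ∂P/∂z, ∂P/∂w vanish at (x,y,z,w) if and only if x = y = z = 0. Consequently, the quintic surface {P = 0} ⊂ ℙ³(ℂ) has a unique singular point, namely [0:0:0:1]. -/
import Mathlib


open MvPolynomial

/-- The homogeneous quintic `P = x⁵ + y⁵ + x·z·w³ + w·z⁴` in variables
`x = X 0`, `y = X 1`, `z = X 2`, `w = X 3` over `ℂ` (the Delsarte quintic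
with Picard number `ρ = 13`). -/
noncomputable def quinticRho13 : MvPolynomial (Fin 4) ℂ :=
  X 0 ^ 5 + X 1 ^ 5 + X 0 * X 2 * X 3 ^ 3 + X 3 * X 2 ^ 4

lemma quintic_pd0 (v : Fin 4 → ℂ) :
    eval v (pderiv 0 quinticRho13) = 5 * v 0 ^ 4 + v 2 * v 3 ^ 3 := by
  simp [quinticRho13, pderiv_X, Pi.single_apply]; ring

lemma quintic_pd1 (v : Fin 4 → ℂ) :
    eval v (pderiv 1 quinticRho13) = 5 * v 1 ^ 4 := by
  simp [quinticRho13, pderiv_X, Pi.single_apply]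

lemma quintic_pd2 (v : Fin 4 → ℂ) :
    eval v (pderiv 2 quinticRho13) = v 0 * v 3 ^ 3 + 4 * v 3 * v 2 ^ 3 := by
  simp [quinticRho13, pderiv_X, Pi.single_apply]; ring

lemma quintic_pd3 (v : Fin 4 → ℂ) :
    eval v (pderiv 3 quinticRho13) = 3 * v 0 * v 2 * v 3 ^ 2 + v 2 ^ 4 := by
  simp [quinticRho13, pderiv_X, Pi.single_apply]; ring

lemma quintic_forward (v : Fin 4 → ℂ)
    (h : ∀ i : Fin 4, eval v (pderiv i quinticRho13) = 0) :
    v 0 = 0 ∧ v 1 = 0 ∧ v 2 = 0 := by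
  have h0 := h 0; have h1 := h 1; have h2 := h 2; have h3 := h 3
  rw [quintic_pd0] at h0
  rw [quintic_pd1] at h1
  rw [quintic_pd2] at h2
  rw [quintic_pd3] at h3
  have hy : v 1 = 0 := by
    have : v 1 ^ 4 = 0 := by linear_combination h1 / 5
    exact pow_eq_zero_iff (by norm_num) |>.mp this
  have hz : v 2 = 0 := by
    by_contra hz
    have key : v 0 * v 3 ^ 3 * (11 * v 2) = 0 := by
      linear_combination 4 * v 3 * h3 - v 2 * h2
    have hz4 : v 2 ^ 4 ≠ 0 := pow_ne_zero _ hz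
    rcases mul_eq_zero.mp key with h' | h'
    · rcases mul_eq_zero.mp h' with hx | hw
      · exact hz4 (by linear_combination h3 - 3 * v 2 * v 3 ^ 2 * hx)
      · have hw0 : v 3 = 0 := by
          have := pow_eq_zero_iff (n := 3) (by norm_num) |>.mp hw
          exact this
        exact hz4 (by linear_combination h3 - 3 * v 0 * v 2 * v 3 * hw0)
    · rcases mul_eq_zero.mp h' with h11 | hzz
      · exact absurd h11 (by norm_num)
      · exact hz hzz
  have hx : v 0 = 0 := by
    have : v 0 ^ 4 = 0 := by linear_combination h0 / 5 - (v 3 ^ 3 / 5) * hz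
    exact pow_eq_zero_iff (by norm_num) |>.mp this
  exact ⟨hx, hy, hz⟩

lemma quintic_backward (v : Fin 4 → ℂ) (hx : v 0 = 0) (hy : v 1 = 0) (hz : v 2 = 0) :
    ∀ i : Fin 4, eval v (pderiv i quinticRho13) = 0 := by
  intro i
  fin_cases i
  · show eval v (pderiv (0 : Fin 4) quinticRho13) = 0
    rw [quintic_pd0, hx, hz]; ring
  · show eval v (pderiv (1 : Fin 4) quinticRho13) = 0
    rw [quintic_pd1, hy]; ring
  · show eval v (pderiv (2 : Fin 4) quinticRho13) = 0
    rw [quintic_pd2, hx, hz]; ring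
  · show eval v (pderiv (3 : Fin 4) quinticRho13) = 0
    rw [quintic_pd3, hz]; ring

/-- For every nonzero `v ∈ ℂ⁴`, all four partial derivatives of `P` vanish at
`v` if and only if `x = y = z = 0`.  Consequently the quintic `{P = 0} ⊂ ℙ³(ℂ)`
has a unique singular point `[0:0:0:1]`. -/
theorem quinticRho13_singular_locus :
    (∀ v : Fin 4 → ℂ, v ≠ 0 →
      ((∀ i : Fin 4, eval v (pderiv i quinticRho13) = 0) ↔
        v 0 = 0 ∧ v 1 = 0 ∧ v 2 = 0)) ∧
    {p : Projectivization ℂ (Fin 4 → ℂ) |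
        ∀ i : Fin 4, eval p.rep (pderiv i quinticRho13) = 0}
      = {Projectivization.mk ℂ ![0, 0, 0, 1] (by intro h; simpa using congrFun h 3)} := by
  refine ⟨fun v hv => ⟨quintic_forward v, fun ⟨hx, hy, hz⟩ => quintic_backward v hx hy hz⟩, ?_⟩
  ext p
  simp only [Set.mem_setOf_eq, Set.mem_singleton_iff]
  constructor
  · intro h
    obtain ⟨hx, hy, hz⟩ := quintic_forward p.rep h
    have hrep := p.rep_nonzero
    have hw : p.rep 3 ≠ 0 := by
      intro hw
      apply hrep
      funext i
      fin_cases i <;> simpa using by first | exact hx | exact hy | exact hz | exact hw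
    conv_lhs => rw [← p.mk_rep]
    rw [Projectivization.mk_eq_mk_iff]
    refine ⟨Units.mk0 (p.rep 3) hw, funext fun i => ?_⟩
    fin_cases i <;>
      simp [hx, hy, hz, Units.smul_def]
  · intro h
    subst h
    have hmk := Projectivization.mk_rep
      (Projectivization.mk ℂ (![0, 0, 0, 1] : Fin 4 → ℂ) (by intro h; simpa using congrFun h 3))
    rw [Projectivization.mk_eq_mk_iff] at hmk
    obtain ⟨a, ha⟩ := hmk
    refine quintic_backward _ ?_ ?_ ?_ <;> rw [← ha] <;> simp [Units.smul_def]
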